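/- Let φ : ℝ → ℝ₊ be an even log-concave function with ∫_ℝ φ = 1. Then for all t ∈ ℝ, (∫_{|t|}^{∞} u·φ(u) du)/φ(t) ≤ |t|/(2φ(0)) + 1/(4φ(0)²). Equality holds for every t when φ(u) = (λ/2)·e^{−λ|u|} for some λ > 0. -/

import Mathlib

open MeasureTheory Real
open scoped ENNReal

noncomputable section

/-- A nonnegative function is log-concave: `ρ(ax+by) ≥ ρ(x)^a ρ(y)^b` for convex
combinations. This is equivalent to the positivity set being convex with `-log ρ`
convex on it. -/
def LogConcaveFun {V : Type*} [AddCommMonoid V] [Module ℝ V] (ρ : V → ℝ) : Prop :=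
  (∀ x, 0 ≤ ρ x) ∧ ∀ x y : V, ∀ a b : ℝ, 0 ≤ a → 0 ≤ b → a + b = 1 →
    ρ x ^ a * ρ y ^ b ≤ ρ (a • x + b • y)

variable {E : Type*} [NormedAddCommGroup E] [InnerProductSpace ℝ E] [CompleteSpace E]
  [MeasurableSpace E]

/-- The variance `∫ (f - E)² dμ` (with `E = (∫ f dμ)/μ(univ)`), as an extended real. -/
def eVar (μ : Measure E) (f : E → ℝ) : ℝ≥0∞ :=
  ∫⁻ x, ENNReal.ofReal ((f x - (∫ y, f y ∂μ) / (μ Set.univ).toReal) ^ 2) ∂μ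

/-- The Dirichlet energy `∫ |∇f|² dμ`, as an extended real. -/
def eEnergy (μ : Measure E) (f : E → ℝ) : ℝ≥0∞ :=
  ∫⁻ x, ENNReal.ofReal (‖gradient f x‖ ^ 2) ∂μ

/-- The Poincaré constant of a measure: the least `C` such that
`Var_μ(f) ≤ C ∫ |∇f|² dμ` for every locally Lipschitz `f ∈ L²(μ)`. -/
def poincareConst (μ : Measure E) : ℝ≥0∞ :=
  sInf {C : ℝ≥0∞ | ∀ f : E → ℝ, LocallyLipschitz f → MemLp f 2 μ →
    eVar μ f ≤ C * eEnergy μ f}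

/-! Put `p = φ 0 = max φ` and compare `φ` on `(0, ∞)` with `ψ u = p e^{-2pu}`, which has the same
value at `0` and the same mass `1/2` there, and for which the bound is an equality. The function
`φ/ψ` is log-concave with value `1` at `0`. If `φ s < ψ s`, then `φ/ψ` is nonincreasing on
`[s, ∞)`, so the tail moment of `φ` is at most `(φ s / ψ s) ∫_s^∞ u ψ`. Otherwise `φ ≥ ψ` on
`[0, s]`, so `φ` has less mass than `ψ` on `(s, ∞)`; as `φ - ψ` changes sign only once, from `+`
to `-`, it also has the smaller first moment there, which suffices as `ψ s ≤ φ s`. -/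

open Set Filter

namespace LogConcaveFun

variable {V : Type*} [AddCommMonoid V] [Module ℝ V] {ρ σ : V → ℝ}

theorem mul (hρ : LogConcaveFun ρ) (hσ : LogConcaveFun σ) : LogConcaveFun (ρ * σ) := by
  refine ⟨fun x => mul_nonneg (hρ.1 x) (hσ.1 x), fun x y a b ha hb hab => ?_⟩
  calc (ρ * σ) x ^ a * (ρ * σ) y ^ b = (ρ x ^ a * ρ y ^ b) * (σ x ^ a * σ y ^ b) := by
        simp only [Pi.mul_apply, mul_rpow (hρ.1 _) (hσ.1 _)]; ring
    _ ≤ ρ (a • x + b • y) * σ (a • x + b • y) :=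
        mul_le_mul (hρ.2 x y a b ha hb hab) (hσ.2 x y a b ha hb hab)
          (mul_nonneg (rpow_nonneg (hσ.1 x) a) (rpow_nonneg (hσ.1 y) b)) (hρ.1 _)

theorem min_le_of_mem_segment (hρ : LogConcaveFun ρ) {x y z : V} (hz : z ∈ segment ℝ x y) :
    min (ρ x) (ρ y) ≤ ρ z := by
  obtain ⟨a, b, ha, hb, hab, rfl⟩ := hz
  have hm : 0 ≤ min (ρ x) (ρ y) := le_min (hρ.1 x) (hρ.1 y)
  calc min (ρ x) (ρ y) = min (ρ x) (ρ y) ^ a * min (ρ x) (ρ y) ^ b := by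
        rw [← rpow_add' hm (by rw [hab]; norm_num), hab, rpow_one]
    _ ≤ ρ x ^ a * ρ y ^ b :=
        mul_le_mul (rpow_le_rpow hm (min_le_left _ _) ha) (rpow_le_rpow hm (min_le_right _ _) hb)
          (rpow_nonneg hm b) (rpow_nonneg (hρ.1 x) a)
    _ ≤ ρ (a • x + b • y) := hρ.2 x y a b ha hb hab

theorem le_of_mem_openSegment (hρ : LogConcaveFun ρ) {x y z : V} (hy : y ∈ openSegment ℝ x z)
    (hx : 0 < ρ x) (hyx : ρ y ≤ ρ x) : ρ z ≤ ρ y := by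
  obtain ⟨a, b, ha, hb, hab, rfl⟩ := hy
  by_contra! hlt
  have hy0 := hρ.1 (a • x + b • z)
  have hconc := hρ.2 x z a b ha.le hb.le hab
  have hstrict : ρ (a • x + b • z) ^ a * ρ (a • x + b • z) ^ b < ρ x ^ a * ρ z ^ b :=
    mul_lt_mul' (rpow_le_rpow hy0 hyx ha.le) (rpow_lt_rpow hy0 hlt hb) (by positivity)
      (rpow_pos_of_pos hx a)
  rw [← rpow_add' hy0 (by rw [hab]; norm_num), hab, rpow_one] at hstrict
  linarith

end LogConcaveFun

theorem LogConcaveFun.le_apply_zero {V : Type*} [AddCommGroup V] [Module ℝ V] {ρ : V → ℝ}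
    (hρ : LogConcaveFun ρ) (heven : Function.Even ρ) (x : V) : ρ x ≤ ρ 0 := by
  have h0 : (0 : V) ∈ segment ℝ x (-x) :=
    ⟨1 / 2, 1 / 2, by norm_num, by norm_num, by norm_num, by rw [smul_neg, add_neg_cancel]⟩
  simpa [heven x] using hρ.min_le_of_mem_segment h0

theorem logConcaveFun_exp_mul (c : ℝ) : LogConcaveFun fun u : ℝ => exp (c * u) := by
  refine ⟨fun _ => (exp_pos _).le, fun x y a b _ _ _ => le_of_eq ?_⟩
  rw [← exp_mul, ← exp_mul, ← exp_add, smul_eq_mul, smul_eq_mul]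
  ring_nf

section ExponentialTail

variable {c : ℝ}

theorem hasDerivAt_mul_exp_neg_primitive (hc : c ≠ 0) (x : ℝ) :
    HasDerivAt (fun u => -((u / c + 1 / c ^ 2) * exp (-c * u))) (x * exp (-c * x)) x := by
  have h := ((((hasDerivAt_id x).div_const c).add_const (1 / c ^ 2)).mul
    ((hasDerivAt_id x).const_mul (-c)).exp).neg
  refine h.congr_deriv ?_
  simp only [id]
  field_simp
  ring

theorem tendsto_mul_exp_neg_primitive (hc : 0 < c) :
    Tendsto (fun u => -((u / c + 1 / c ^ 2) * exp (-c * u))) atTop (nhds 0) := by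
  have hcu : Tendsto (fun u => c * u) atTop atTop := tendsto_id.const_mul_atTop hc
  have h1 : Tendsto (fun u => c * u * exp (-(c * u))) atTop (nhds 0) := by
    simpa [Function.comp_def] using (tendsto_pow_mul_exp_neg_atTop_nhds_zero 1).comp hcu
  have h2 : Tendsto (fun u => exp (-(c * u))) atTop (nhds 0) :=
    tendsto_exp_neg_atTop_nhds_zero.comp hcu
  convert ((h1.add h2).const_mul (1 / c ^ 2)).neg using 2 with u
  · field_simp
  · simp

theorem integrableOn_Ioi_mul_exp_neg (hc : 0 < c) {s : ℝ} (hs : 0 ≤ s) :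
    IntegrableOn (fun u => u * exp (-c * u)) (Ioi s) :=
  integrableOn_Ioi_deriv_of_nonneg' (fun _ _ => hasDerivAt_mul_exp_neg_primitive hc.ne' _)
    (fun _ hx => mul_nonneg (hs.trans (le_of_lt hx)) (exp_pos _).le)
    (tendsto_mul_exp_neg_primitive hc)

theorem integral_Ioi_mul_exp_neg (hc : 0 < c) {s : ℝ} (hs : 0 ≤ s) :
    ∫ u in Ioi s, u * exp (-c * u) = (s / c + 1 / c ^ 2) * exp (-c * s) := by
  rw [integral_Ioi_of_hasDerivAt_of_nonneg' (fun _ _ => hasDerivAt_mul_exp_neg_primitive hc.ne' _)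
    (fun _ hx => mul_nonneg (hs.trans (le_of_lt hx)) (exp_pos _).le)
    (tendsto_mul_exp_neg_primitive hc)]
  ring

end ExponentialTail

theorem setIntegral_Ioi_mul_le_of_le_exp {f : ℝ → ℝ} {c s K : ℝ} (hc : 0 < c) (hs : 0 ≤ s)
    (hf0 : ∀ u > s, 0 ≤ f u) (hfK : ∀ u > s, f u ≤ K * exp (-c * u)) :
    ∫ u in Ioi s, u * f u ≤ K * ((s / c + 1 / c ^ 2) * exp (-c * s)) := by
  have hu : ∀ u > s, 0 ≤ u := fun u hu => hs.trans (le_of_lt hu)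
  calc ∫ u in Ioi s, u * f u ≤ ∫ u in Ioi s, K * (u * exp (-c * u)) := by
        refine integral_mono_of_nonneg ?_ ((integrableOn_Ioi_mul_exp_neg hc hs).const_mul K) ?_
        · filter_upwards [self_mem_ae_restrict measurableSet_Ioi] with u hu'
          exact mul_nonneg (hu u hu') (hf0 u hu')
        · filter_upwards [self_mem_ae_restrict measurableSet_Ioi] with u hu'
          nlinarith [mul_le_mul_of_nonneg_left (hfK u hu') (hu u hu')]
    _ = K * ((s / c + 1 / c ^ 2) * exp (-c * s)) := by
        rw [integral_const_mul, integral_Ioi_mul_exp_neg hc hs]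

theorem setIntegral_Ioi_le_of_le_on_Ioc {f g : ℝ → ℝ} {a s : ℝ} (has : a ≤ s)
    (hf : IntegrableOn f (Ioi a)) (hg : IntegrableOn g (Ioi a))
    (hfg : ∫ u in Ioi a, f u = ∫ u in Ioi a, g u) (hle : ∀ u ∈ Ioc a s, g u ≤ f u) :
    ∫ u in Ioi s, f u ≤ ∫ u in Ioi s, g u := by
  have hsub : Ioc a s ⊆ Ioi a := Ioc_subset_Ioi_self
  have hsub' : Ioi s ⊆ Ioi a := Ioi_subset_Ioi has
  rw [← Ioc_union_Ioi_eq_Ioi has, setIntegral_union Ioc_disjoint_Ioi_same measurableSet_Ioi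
    (hf.mono_set hsub) (hf.mono_set hsub'), setIntegral_union Ioc_disjoint_Ioi_same
    measurableSet_Ioi (hg.mono_set hsub) (hg.mono_set hsub')] at hfg
  have := setIntegral_mono_on (hg.mono_set hsub) (hf.mono_set hsub) measurableSet_Ioc hle
  linarith

theorem setIntegral_mul_le_of_sign_change {μ : Measure ℝ} {T : Set ℝ} {f g : ℝ → ℝ} {a : ℝ}
    (ha : 0 ≤ a) (hf : IntegrableOn f T μ) (hg : IntegrableOn g T μ)
    (hug : IntegrableOn (fun u => u * g u) T μ)
    (hfg : ∫ u in T, f u ∂μ ≤ ∫ u in T, g u ∂μ) (huf : ∀ᵐ u ∂μ.restrict T, 0 ≤ u * f u)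
    (hsign : ∀ᵐ u ∂μ.restrict T, (u - a) * (f u - g u) ≤ 0) :
    ∫ u in T, u * f u ∂μ ≤ ∫ u in T, u * g u ∂μ := by
  calc ∫ u in T, u * f u ∂μ ≤ ∫ u in T, (u * g u + a * (f u - g u)) ∂μ := by
        refine integral_mono_of_nonneg huf (hug.add ((hf.sub hg).const_mul a)) ?_
        filter_upwards [hsign] with u hu
        linarith
    _ = ∫ u in T, u * g u ∂μ + a * (∫ u in T, f u ∂μ - ∫ u in T, g u ∂μ) := by
        rw [integral_add hug (g := fun u => a * (f u - g u)) ((hf.sub hg).const_mul a),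
          integral_const_mul, integral_sub hf hg]
    _ ≤ ∫ u in T, u * g u ∂μ := by nlinarith

theorem mul_exp_neg_le_iff {a b c u : ℝ} : a * exp (-c * u) ≤ b ↔ a ≤ b * exp (c * u) := by
  rw [neg_mul, exp_neg, ← div_eq_mul_inv, div_le_iff₀ (exp_pos _)]

theorem le_mul_exp_neg_iff {a b c u : ℝ} : b ≤ a * exp (-c * u) ↔ b * exp (c * u) ≤ a := by
  rw [neg_mul, exp_neg, ← div_eq_mul_inv, le_div_iff₀ (exp_pos _)]

namespace LogConcaveFun

variable {φ : ℝ → ℝ} {c : ℝ}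

theorem apply_zero_le_mul_exp (hφ : LogConcaveFun φ) {v w : ℝ} (hv : 0 ≤ v) (hvw : v ≤ w)
    (hw : φ 0 ≤ φ w * exp (c * w)) : φ 0 ≤ φ v * exp (c * v) := by
  have hseg : v ∈ segment ℝ 0 w := by rw [segment_eq_Icc (hv.trans hvw)]; exact ⟨hv, hvw⟩
  simpa [hw] using (hφ.mul (logConcaveFun_exp_mul c)).min_le_of_mem_segment hseg

theorem mul_exp_le_mul_exp (hφ : LogConcaveFun φ) (hp : 0 < φ 0) {s u : ℝ} (hs : 0 < s)
    (hsu : s ≤ u) (hφs : φ s * exp (c * s) ≤ φ 0) : φ u * exp (c * u) ≤ φ s * exp (c * s) := by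
  rcases hsu.eq_or_lt with rfl | hsu
  · rfl
  have hseg : s ∈ openSegment ℝ 0 u := by rw [openSegment_eq_Ioo (hs.trans hsu)]; exact ⟨hs, hsu⟩
  exact (hφ.mul (logConcaveFun_exp_mul c)).le_of_mem_openSegment hseg (by simpa using hp)
    (by simpa using hφs)

/-- The crossing point `a` is the supremum of `{u ≥ 0 | φ u ≥ φ 0 e^{-cu}}`; this set is an initial
segment of `[0, ∞)`, and if it is unbounded then `φ = φ 0 e^{-c·}` a.e. on `(0, ∞)` by the mass
condition. -/
theorem exists_sign_change (hφ : LogConcaveFun φ) (hc : 0 < c) {s : ℝ} (hs : 0 ≤ s)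
    (hφi : IntegrableOn φ (Ioi 0))
    (hmass : ∫ u in Ioi 0, φ u = ∫ u in Ioi 0, φ 0 * exp (-c * u)) (hφs : φ 0 ≤ φ s * exp (c * s)) :
    ∃ a, 0 ≤ a ∧ ∀ᵐ u ∂volume.restrict (Ioi s), (u - a) * (φ u - φ 0 * exp (-c * u)) ≤ 0 := by
  set S := {u | 0 ≤ u ∧ φ 0 ≤ φ u * exp (c * u)}
  by_cases hS : BddAbove S
  · refine ⟨sSup S, hs.trans (le_csSup hS ⟨hs, hφs⟩), ae_restrict_of_forall_mem measurableSet_Ioi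
      fun u hu => ?_⟩
    have hu0 : 0 ≤ u := hs.trans (le_of_lt hu)
    by_cases huS : u ∈ S
    · exact mul_nonpos_of_nonpos_of_nonneg (sub_nonpos.2 (le_csSup hS huS))
        (sub_nonneg.2 (mul_exp_neg_le_iff.2 huS.2))
    · have hlt : φ u < φ 0 * exp (-c * u) := not_le.1 fun h => huS ⟨hu0, mul_exp_neg_le_iff.1 h⟩
      refine mul_nonpos_of_nonneg_of_nonpos (sub_nonneg.2 (not_lt.1 fun hua => huS ?_))
        (sub_nonpos.2 hlt.le)
      obtain ⟨w, hwS, huw⟩ := exists_lt_of_lt_csSup (⟨s, hs, hφs⟩ : S.Nonempty) hua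
      exact ⟨hu0, hφ.apply_zero_le_mul_exp hu0 huw.le hwS.2⟩
  · have hle : ∀ u ∈ Ioi (0 : ℝ), φ 0 * exp (-c * u) ≤ φ u := fun u hu => by
      obtain ⟨w, hwS, huw⟩ := not_bddAbove_iff.1 hS u
      exact mul_exp_neg_le_iff.2 (hφ.apply_zero_le_mul_exp (le_of_lt hu) huw.le hwS.2)
    have hae := (integral_eq_iff_of_ae_le ((exp_neg_integrableOn_Ioi 0 hc).const_mul (φ 0)) hφi
      (ae_restrict_of_forall_mem measurableSet_Ioi hle)).1 hmass.symm
    refine ⟨0, le_rfl, ae_restrict_of_ae_restrict_of_subset (Ioi_subset_Ioi hs) ?_⟩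
    filter_upwards [hae] with u hu
    rw [hu, sub_self, mul_zero]

theorem setIntegral_Ioi_mul_le_of_apply_zero_le (hφ : LogConcaveFun φ) (hc : 0 < c) {s : ℝ}
    (hs : 0 ≤ s) (hφi : IntegrableOn φ (Ioi 0))
    (hmass : ∫ u in Ioi 0, φ u = ∫ u in Ioi 0, φ 0 * exp (-c * u)) (hφs : φ 0 ≤ φ s * exp (c * s)) :
    ∫ u in Ioi s, u * φ u ≤ ∫ u in Ioi s, u * (φ 0 * exp (-c * u)) := by
  have hψi : ∀ r, IntegrableOn (fun u => φ 0 * exp (-c * u)) (Ioi r) := fun r =>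
    (exp_neg_integrableOn_Ioi r hc).const_mul (φ 0)
  have hfirst : ∫ u in Ioi s, φ u ≤ ∫ u in Ioi s, φ 0 * exp (-c * u) :=
    setIntegral_Ioi_le_of_le_on_Ioc hs hφi (hψi 0) hmass fun u hu =>
      mul_exp_neg_le_iff.2 (hφ.apply_zero_le_mul_exp (le_of_lt hu.1) hu.2 hφs)
  obtain ⟨a, ha, hsign⟩ := hφ.exists_sign_change hc hs hφi hmass hφs
  refine setIntegral_mul_le_of_sign_change ha (hφi.mono_set (Ioi_subset_Ioi hs)) (hψi s)
    (IntegrableOn.congr_fun ((integrableOn_Ioi_mul_exp_neg hc hs).const_mul (φ 0))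
      (fun u _ => by ring) measurableSet_Ioi) hfirst ?_ hsign
  exact ae_restrict_of_forall_mem measurableSet_Ioi fun u hu =>
    mul_nonneg (hs.trans (le_of_lt hu)) (hφ.1 u)

theorem setIntegral_Ioi_mul_le (hφ : LogConcaveFun φ) (hp : 0 < φ 0) (hc : 0 < c) {s : ℝ}
    (hs : 0 ≤ s) (hφi : IntegrableOn φ (Ioi 0))
    (hmass : ∫ u in Ioi 0, φ u = ∫ u in Ioi 0, φ 0 * exp (-c * u)) :
    ∫ u in Ioi s, u * φ u ≤ φ s * (s / c + 1 / c ^ 2) := by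
  have hexp : exp (c * s) * exp (-c * s) = 1 := by rw [← exp_add]; simp
  have hR : 0 ≤ s / c + 1 / c ^ 2 := by positivity
  rcases le_or_gt (φ 0) (φ s * exp (c * s)) with hφs | hφs
  · calc ∫ u in Ioi s, u * φ u ≤ ∫ u in Ioi s, φ 0 * (u * exp (-c * u)) := by
          simpa only [mul_left_comm] using hφ.setIntegral_Ioi_mul_le_of_apply_zero_le hc hs hφi
            hmass hφs
      _ = φ 0 * exp (-c * s) * (s / c + 1 / c ^ 2) := by
          rw [integral_const_mul, integral_Ioi_mul_exp_neg hc hs]; ring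
      _ ≤ φ s * (s / c + 1 / c ^ 2) :=
          mul_le_mul_of_nonneg_right (mul_exp_neg_le_iff.2 hφs) hR
  · have hs0 : 0 < s := hs.lt_of_ne fun h => by simp [← h] at hφs
    calc ∫ u in Ioi s, u * φ u
        ≤ φ s * exp (c * s) * ((s / c + 1 / c ^ 2) * exp (-c * s)) := by
          refine setIntegral_Ioi_mul_le_of_le_exp hc hs (fun u _ => hφ.1 u) fun u hu =>
            le_mul_exp_neg_iff.2 (hφ.mul_exp_le_mul_exp hp hs0 (le_of_lt hu) hφs.le)
      _ = φ s * (s / c + 1 / c ^ 2) := by linear_combination φ s * (s / c + 1 / c ^ 2) * hexp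

end LogConcaveFun

theorem integral_Ioi_zero_of_even {f : ℝ → ℝ} (heven : Function.Even f) :
    ∫ u in Ioi 0, f u = (∫ u, f u) / 2 := by
  have habs : (fun u => f |u|) = f := funext fun u => by
    rcases abs_choice u with h | h <;> rw [h]
    exact heven u
  have h := integral_comp_abs (f := f)
  rw [habs] at h
  linarith

theorem LogConcaveFun.apply_zero_pos {φ : ℝ → ℝ} (hφ : LogConcaveFun φ) (heven : Function.Even φ)
    (hint : ∫ u, φ u = 1) : 0 < φ 0 := by
  by_contra! h
  have : φ = 0 := funext fun x => le_antisymm ((hφ.le_apply_zero heven x).trans h) (hφ.1 x)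
  simp [this] at hint

/-- For an even log-concave probability density `φ` on `ℝ`,
`(∫_{|t|}^∞ u·φ(u) du)/φ(t) ≤ |t|/(2φ(0)) + 1/(4φ(0)²)` for all `t`, with equality
(for every `t`) when `φ(u) = (λ/2)e^{-λ|u|}` for some `λ > 0`. -/
theorem tail_moment_ratio_bound (φ : ℝ → ℝ)
    (hlc : LogConcaveFun φ) (heven : ∀ t, φ (-t) = φ t)
    (hint : ∫ t, φ t = 1) :
    (∀ t : ℝ, (∫ u in Set.Ioi |t|, u * φ u) / φ t ≤
        |t| / (2 * φ 0) + 1 / (4 * φ 0 ^ 2)) ∧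
      ∀ l : ℝ, 0 < l → (∀ u, φ u = l / 2 * Real.exp (-(l * |u|))) →
        ∀ t : ℝ, (∫ u in Set.Ioi |t|, u * φ u) / φ t =
          |t| / (2 * φ 0) + 1 / (4 * φ 0 ^ 2) := by
  refine ⟨fun t => ?_, fun l hl hφl t => ?_⟩
  · have hp := hlc.apply_zero_pos heven hint
    have hmass : ∫ u in Ioi 0, φ u = ∫ u in Ioi 0, φ 0 * exp (-(2 * φ 0) * u) := by
      rw [integral_Ioi_zero_of_even heven, hint, integral_const_mul,
        integral_exp_mul_Ioi (by linarith) 0]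
      field_simp
      simp
    have key := hlc.setIntegral_Ioi_mul_le hp (by positivity) (abs_nonneg t)
      (Integrable.of_integral_ne_zero (by rw [hint]; exact one_ne_zero)).integrableOn hmass
    have hφt : φ t = φ |t| := by rcases abs_choice t with h | h <;> rw [h]; exact (heven t).symm
    rw [hφt]
    exact div_le_of_le_mul₀ (hlc.1 _) (by positivity) (key.trans_eq (by ring))
  · have hφt : φ t = l / 2 * exp (-l * |t|) := by rw [hφl, neg_mul]
    have hφu : ∀ u ∈ Ioi |t|, u * φ u = l / 2 * (u * exp (-l * u)) := fun u hu => by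
      rw [hφl, abs_of_pos ((abs_nonneg t).trans_lt hu), neg_mul]; ring
    rw [setIntegral_congr_fun measurableSet_Ioi hφu, integral_const_mul,
      integral_Ioi_mul_exp_neg hl (abs_nonneg t), hφt, hφl 0, abs_zero, mul_zero, neg_zero, exp_zero,
      mul_one]
    field_simp
    ring
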